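/- arXiv:2109.15041 — 5 statements merged into one kernel-verified Lean document; each statement's English description precedes it below -/
import Mathlib

section
/- Fix R > R'' and δ ∈ (0,1/2). For t > 0, r > 0, ω ∈ S², ξ = (ξ₀,ξ₁,ξ₂,ξ₃) ∈ ℝ⁴ and τ ∈ ℝ, define p₁ := ξ₀² − Σ_{i=1}^3 ξ_i² + τ² t^{−δ−1}(2 − t^{−δ−1}), q := −2((1−t^{−δ−1})ξ₀ + Σ_{i=1}^3 ω_i ξ_i), and b := −4(δ+1)t^{−δ−2}ξ₀² + 4r^{−1}(Σ_{i=1}^3 ξ_i² − (Σ_{i=1}^3 ω_i ξ_i)²) − 4τ²(δ+1)t^{−δ−2}(1−t^{−δ−1})². Then there exists T₀ depending only on R and R'' such that for all t ≥ T₀, all r with R'' < r − t < R, all ω ∈ S², all ξ ∈ ℝ⁴ and all τ ∈ ℝ: b ≥ −r^{−1}q² − 4r^{−1}p₁ + t^{−δ−2}(ξ₀² + τ²) + 4 r^{−1} q (−1 + t^{−δ−1}) ξ₀. -/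
/-! Write `s = t^{-δ-1}`, so that `t^{-δ-2} = s / t`. In `b` minus the lower bound the angular
terms cancel exactly, and what is left is the gain `4 r⁻¹ s (2 - s) (ξ₀² + τ²)` coming from
`-4 r⁻¹ p₁`, minus losses of size at most `(4δ + 5) (s / t) (ξ₀² + τ²)`. Since `s t ≤ 1` and
`r < t + R`, the gain wins as soon as `7 (t + R) ≤ 8 t - 4`. -/

noncomputable section
open Real

namespace UCP

/-- The symbol `p₁ = ξ₀² - Σξᵢ² + τ² t^{-δ-1}(2 - t^{-δ-1})` of the conjugated wave
operator. -/
def p1sym (δ t τ : ℝ) (ξ : Fin 4 → ℝ) : ℝ :=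
  ξ 0 ^ 2 - (∑ i : Fin 3, ξ i.succ ^ 2) + τ ^ 2 * t ^ (-δ - 1) * (2 - t ^ (-δ - 1))

/-- The rescaled symbol `q = p₂/(iτ) = -2((1-t^{-δ-1})ξ₀ + Σ ωᵢξᵢ)`. -/
def qsym (δ t : ℝ) (ω : Fin 3 → ℝ) (ξ : Fin 4 → ℝ) : ℝ :=
  -2 * ((1 - t ^ (-δ - 1)) * ξ 0 + ∑ i : Fin 3, ω i * ξ i.succ)

/-- The rescaled Poisson bracket `b = (1/(iτ)){p₁,p₂}`. -/
def bsym (δ t r τ : ℝ) (ω : Fin 3 → ℝ) (ξ : Fin 4 → ℝ) : ℝ :=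
  -4 * (δ + 1) * t ^ (-δ - 2) * ξ 0 ^ 2
    + 4 * r⁻¹ * ((∑ i : Fin 3, ξ i.succ ^ 2) - (∑ i : Fin 3, ω i * ξ i.succ) ^ 2)
    - 4 * τ ^ 2 * (δ + 1) * t ^ (-δ - 2) * (1 - t ^ (-δ - 1)) ^ 2

def bsymLowerBound (δ t r τ : ℝ) (ω : Fin 3 → ℝ) (ξ : Fin 4 → ℝ) : ℝ :=
  -(r⁻¹) * qsym δ t ω ξ ^ 2 - 4 * r⁻¹ * p1sym δ t τ ξ
    + t ^ (-δ - 2) * (ξ 0 ^ 2 + τ ^ 2)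
    + 4 * r⁻¹ * qsym δ t ω ξ * ((-1 + t ^ (-δ - 1)) * ξ 0)

theorem bsym_sub_bsymLowerBound (δ t r τ : ℝ) (ω : Fin 3 → ℝ) (ξ : Fin 4 → ℝ) :
    bsym δ t r τ ω ξ - bsymLowerBound δ t r τ ω ξ =
      4 * r⁻¹ * t ^ (-δ - 1) * (2 - t ^ (-δ - 1)) * (ξ 0 ^ 2 + τ ^ 2)
        - t ^ (-δ - 2) * ((4 * δ + 5) * ξ 0 ^ 2
          + (4 * (δ + 1) * (1 - t ^ (-δ - 1)) ^ 2 + 1) * τ ^ 2) := by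
  simp only [bsym, bsymLowerBound, p1sym, qsym, Fin.sum_univ_three]
  ring

theorem rpow_neg_sub_two_eq_div {t : ℝ} (ht : 0 < t) (δ : ℝ) :
    t ^ (-δ - 2) = t ^ (-δ - 1) / t := by
  rw [show -δ - 2 = (-δ - 1) - 1 by ring, rpow_sub ht, rpow_one]

theorem rpow_neg_sub_one_mul_self_le_one {t δ : ℝ} (ht : 1 ≤ t) (hδ : 0 ≤ δ) :
    t ^ (-δ - 1) * t ≤ 1 := by
  calc t ^ (-δ - 1) * t = t ^ (-δ) := by
        rw [← rpow_add_one (by positivity)]; ring_nf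
    _ ≤ 1 := rpow_le_one_of_one_le_of_nonpos ht (by linarith)

theorem loss_coeff_le_gain_coeff {δ s t r : ℝ} (hs : 0 ≤ s) (ht : 0 < t) (hr : 0 < r)
    (h : (4 * δ + 5) * r ≤ 4 * (2 - s) * t) :
    s / t * (4 * δ + 5) ≤ 4 * r⁻¹ * s * (2 - s) := by
  have hgap : 4 * r⁻¹ * s * (2 - s) - s / t * (4 * δ + 5)
      = s / (t * r) * (4 * (2 - s) * t - (4 * δ + 5) * r) := by
    field_simp
  have : 0 ≤ s / (t * r) * (4 * (2 - s) * t - (4 * δ + 5) * r) :=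
    mul_nonneg (by positivity) (by linarith)
  linarith

theorem bsymLowerBound_le_bsym {δ t r : ℝ} (hδ : -1 ≤ δ) (ht : 1 ≤ t) (hr : 0 < r)
    (hrt : (4 * δ + 5) * r ≤ 4 * (2 - t ^ (-δ - 1)) * t) (τ : ℝ) (ω : Fin 3 → ℝ)
    (ξ : Fin 4 → ℝ) : bsymLowerBound δ t r τ ω ξ ≤ bsym δ t r τ ω ξ := by
  have ht0 : 0 < t := by linarith
  have hs0 : 0 ≤ t ^ (-δ - 1) := rpow_nonneg ht0.le _
  have hs1 : t ^ (-δ - 1) ≤ 1 := rpow_le_one_of_one_le_of_nonpos ht (by linarith)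
  have hloss : 4 * (δ + 1) * (1 - t ^ (-δ - 1)) ^ 2 + 1 ≤ 4 * δ + 5 := by
    nlinarith [mul_nonneg (mul_nonneg (by linarith : (0 : ℝ) ≤ δ + 1) hs0)
      (by linarith : (0 : ℝ) ≤ 2 - t ^ (-δ - 1))]
  have hcoeff := loss_coeff_le_gain_coeff hs0 ht0 hr hrt
  have hu : 0 ≤ t ^ (-δ - 2) := rpow_nonneg ht0.le _
  rw [rpow_neg_sub_two_eq_div ht0] at hu
  rw [← sub_nonneg, bsym_sub_bsymLowerBound, rpow_neg_sub_two_eq_div ht0]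
  nlinarith [mul_le_mul_of_nonneg_left hloss (mul_nonneg hu (sq_nonneg τ)),
    mul_le_mul_of_nonneg_right hcoeff (add_nonneg (sq_nonneg (ξ 0)) (sq_nonneg τ))]

theorem stmt6_general (R R'' : ℝ) :
    ∃ T₀ : ℝ, 0 < T₀ ∧
      ∀ δ : ℝ, 0 < δ → δ < 1 / 2 →
      ∀ t r : ℝ, T₀ ≤ t → R'' < r - t → r - t < R →
      ∀ ω : Fin 3 → ℝ, (∑ i : Fin 3, ω i ^ 2) = 1 →
      ∀ ξ : Fin 4 → ℝ, ∀ τ : ℝ,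
        -(r⁻¹) * qsym δ t ω ξ ^ 2 - 4 * r⁻¹ * p1sym δ t τ ξ
            + t ^ (-δ - 2) * (ξ 0 ^ 2 + τ ^ 2)
            + 4 * r⁻¹ * qsym δ t ω ξ * ((-1 + t ^ (-δ - 1)) * ξ 0)
          ≤ bsym δ t r τ ω ξ := by
  refine ⟨max 1 (max (7 * R + 4) (-R'')), lt_max_of_lt_left one_pos, ?_⟩
  intro δ hδ0 hδ1 t r ht hrl hru ω _ ξ τ
  obtain ⟨ht1, htR, htR''⟩ : 1 ≤ t ∧ 7 * R + 4 ≤ t ∧ -R'' ≤ t := by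
    simpa only [max_le_iff] using ht
  have hr : 0 < r := by linarith
  have hst := rpow_neg_sub_one_mul_self_le_one ht1 hδ0.le
  have hrt : (4 * δ + 5) * r ≤ 4 * (2 - t ^ (-δ - 1)) * t :=
    calc (4 * δ + 5) * r ≤ 7 * r := by nlinarith
      _ ≤ 8 * t - 4 := by linarith
      _ ≤ 4 * (2 - t ^ (-δ - 1)) * t := by linarith
  exact bsymLowerBound_le_bsym (by linarith) ht1 hr hrt τ ω ξ

/-- Lemma 3.4 of the paper: lower bound for the rescaled Poisson
bracket.  The threshold `T₀` depends only on `R` and `R''`. -/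
theorem stmt6 (R R'' : ℝ) (hRR : R'' < R) :
    ∃ T₀ : ℝ, 0 < T₀ ∧
      ∀ δ : ℝ, 0 < δ → δ < 1 / 2 →
      ∀ t r : ℝ, T₀ ≤ t → R'' < r - t → r - t < R →
      ∀ ω : Fin 3 → ℝ, (∑ i : Fin 3, ω i ^ 2) = 1 →
      ∀ ξ : Fin 4 → ℝ, ∀ τ : ℝ,
        -(r⁻¹) * qsym δ t ω ξ ^ 2 - 4 * r⁻¹ * p1sym δ t τ ξ
            + t ^ (-δ - 2) * (ξ 0 ^ 2 + τ ^ 2)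
            + 4 * r⁻¹ * qsym δ t ω ξ * ((-1 + t ^ (-δ - 1)) * ξ 0)
          ≤ bsym δ t r τ ω ξ :=
  stmt6_general R R''

end UCP
end
end

section
/- Fix ν > 0 and κ ∈ ℝ, and let h(t,r) := (r+ν)² − (t+κ)². Then for all t > 0 and r > 0 with h(t,r) > 0: ∂_t²h − 2(∂_t h/∂_r h)∂_t∂_r h + (∂_t h/∂_r h)²∂_r²h + r^{−1}(1 − (∂_t h/∂_r h)²)∂_r h = 2ν·h·r^{−1}(r+ν)^{−2} > 0. (Here ∂_r h = 2(r+ν) > 0, ∂_t h = −2(t+κ), ∂_t²h = −2, ∂_r²h = 2, ∂_t∂_r h = 0.) -/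
/-!
Since `h(t,r) = (r+ν)² - (t+κ)²` separates into a function of `r` minus a function of `t`,
its mixed derivative vanishes and the remaining derivatives are constants. With
`a = ∂_t h / ∂_r h = -(t+κ)/(r+ν)` the expression collapses to
`-2(1 - a²) + 2(1 - a²)(r+ν)/r = 2ν(1 - a²)/r`, and `1 - a² = h/(r+ν)²`.
-/

noncomputable section

namespace UCP

/-- `∂_t h` for a function `h = h(t,r)`. -/
def hT (h : ℝ × ℝ → ℝ) (q : ℝ × ℝ) : ℝ := fderiv ℝ h q (1, 0)

/-- `∂_r h` for a function `h = h(t,r)`. -/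
def hR (h : ℝ × ℝ → ℝ) (q : ℝ × ℝ) : ℝ := fderiv ℝ h q (0, 1)

/-- The hyperboloidal weight `h(t,r) = (r+ν)² - (t+κ)²`. -/
def hfun (ν κ : ℝ) : ℝ × ℝ → ℝ := fun q => (q.2 + ν) ^ 2 - (q.1 + κ) ^ 2

theorem hT_eq_deriv {h : ℝ × ℝ → ℝ} {q : ℝ × ℝ} (hd : DifferentiableAt ℝ h q) :
    hT h q = deriv (fun t => h (t, q.2)) q.1 := by
  have hslice : HasDerivAt (fun t : ℝ => (t, q.2)) ((1 : ℝ), (0 : ℝ)) q.1 :=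
    (hasDerivAt_id q.1).prodMk (hasDerivAt_const q.1 q.2)
  exact (hd.hasFDerivAt.comp_hasDerivAt q.1 hslice).deriv.symm

theorem hR_eq_deriv {h : ℝ × ℝ → ℝ} {q : ℝ × ℝ} (hd : DifferentiableAt ℝ h q) :
    hR h q = deriv (fun r => h (q.1, r)) q.2 := by
  have hslice : HasDerivAt (fun r : ℝ => (q.1, r)) ((0 : ℝ), (1 : ℝ)) q.2 :=
    (hasDerivAt_const q.2 q.1).prodMk (hasDerivAt_id q.2)
  exact (hd.hasFDerivAt.comp_hasDerivAt q.2 hslice).deriv.symm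

theorem hT_hfun (ν κ : ℝ) : hT (hfun ν κ) = fun q => -(2 * (q.1 + κ)) := by
  funext q
  rw [hT_eq_deriv (by unfold hfun; fun_prop)]
  simp [hfun]

theorem hR_hfun (ν κ : ℝ) : hR (hfun ν κ) = fun q => 2 * (q.2 + ν) := by
  funext q
  rw [hR_eq_deriv (by unfold hfun; fun_prop)]
  simp [hfun]

theorem hT_hT_hfun (ν κ : ℝ) (q : ℝ × ℝ) : hT (hT (hfun ν κ)) q = -2 := by
  rw [hT_hfun, hT_eq_deriv (by fun_prop)]
  simp

theorem hT_hR_hfun (ν κ : ℝ) (q : ℝ × ℝ) : hT (hR (hfun ν κ)) q = 0 := by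
  rw [hR_hfun, hT_eq_deriv (by fun_prop)]
  simp

theorem hR_hR_hfun (ν κ : ℝ) (q : ℝ × ℝ) : hR (hR (hfun ν κ)) q = 2 := by
  rw [hR_hfun, hR_eq_deriv (by fun_prop)]
  simp

/-- Example 2.11 of the paper: the pseudoconvexity expression of
`h(t,r) = (r+ν)² - (t+κ)²` equals `2ν h r⁻¹ (r+ν)⁻²`, which is positive on `{h > 0}`. -/
theorem stmt15 (ν κ : ℝ) (hν : 0 < ν) :
    ∀ t r : ℝ, 0 < t → 0 < r → 0 < hfun ν κ (t, r) →
      (hT (hT (hfun ν κ)) (t, r)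
          - 2 * (hT (hfun ν κ) (t, r) / hR (hfun ν κ) (t, r))
              * hT (hR (hfun ν κ)) (t, r)
          + (hT (hfun ν κ) (t, r) / hR (hfun ν κ) (t, r)) ^ 2
              * hR (hR (hfun ν κ)) (t, r)
          + r⁻¹ * (1 - (hT (hfun ν κ) (t, r) / hR (hfun ν κ) (t, r)) ^ 2)
              * hR (hfun ν κ) (t, r)
        = 2 * ν * hfun ν κ (t, r) * r⁻¹ * ((r + ν) ^ 2)⁻¹)
      ∧ 0 < 2 * ν * hfun ν κ (t, r) * r⁻¹ * ((r + ν) ^ 2)⁻¹ := by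
  intro t r _ hr hh
  refine ⟨?_, by positivity⟩
  have hrν : r + ν ≠ 0 := by positivity
  rw [hT_hT_hfun, hT_hR_hfun, hR_hR_hfun, hT_hfun, hR_hfun]
  simp only [hfun]
  field_simp
  ring

end UCP
end
end

section
/- Fix R₁ > 0 and R'' ∈ ℝ with |R''| < R₁. Then D_{R₁,R''} = ⋃ { S_{ν,κ,c} : ν > 0, R'' + ν < κ < R₁ + ν, c > (R₁+ν)² − κ² }; moreover, whenever ν > 0 and R'' + ν < κ < R₁ + ν one has (R₁+ν)² − κ² > 0 (so the constraint set of c is contained in (0,∞)). -/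
noncomputable section
open MeasureTheory Real Set Filter Topology

namespace UCP

/-- Spacetime `ℝ^{1+3}`: a point is `(t, x)` with `x ∈ ℝ³`. -/
abbrev Spc : Type := ℝ × EuclideanSpace ℝ (Fin 3)

/-- Coordinate directions `e_α`, `α = 0,1,2,3` (`e_0` is the time direction). -/
def eVec (α : Fin 4) : Spc :=
  Fin.cases ((1 : ℝ), (0 : EuclideanSpace ℝ (Fin 3)))
    (fun i => ((0 : ℝ), EuclideanSpace.single i (1 : ℝ))) α

/-- The partial derivative `∂_α u`. -/
def pd (α : Fin 4) (u : Spc → ℝ) (p : Spc) : ℝ := fderiv ℝ u p (eVec α)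

/-- `∂_t u`. -/
def dt (u : Spc → ℝ) : Spc → ℝ := pd 0 u

/-- `∂_i u`, `i = 1,2,3`. -/
def dxi (i : Fin 3) (u : Spc → ℝ) : Spc → ℝ := pd i.succ u

/-- The d'Alembertian `□u = -∂_t² u + Δ_x u`. -/
def box (u : Spc → ℝ) (p : Spc) : ℝ :=
  - dt (dt u) p + ∑ i : Fin 3, dxi i (dxi i u) p

/-- Signs of the Minkowski metric `diag(-1,1,1,1)`, so that `∂^α = eta α • ∂_α`. -/
def eta (α : Fin 4) : ℝ := if α = 0 then -1 else 1

/-- `r = |x|`. -/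
def rr (p : Spc) : ℝ := ‖p.2‖

/-- The radial derivative `∂_r u = Σ_i (x_i/r) ∂_i u`. -/
def dr (u : Spc → ℝ) (p : Spc) : ℝ := ∑ i : Fin 3, (p.2 i / rr p) * dxi i u p

/-- `ω̂ = (-1, x/r)` as a `Fin 4`-indexed family. -/
def hatom (p : Spc) (α : Fin 4) : ℝ := Fin.cases (-1 : ℝ) (fun i => p.2 i / rr p) α

/-- The region `𝒟_{R₁,R''} = {t > 0, (r-t-R'')(r+t+R'') > R₁² - (R'')²}`. -/
def DD (R₁ R'' : ℝ) : Set Spc :=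
  {p | 0 < p.1 ∧ R₁ ^ 2 - R'' ^ 2 < (rr p - p.1 - R'') * (rr p + p.1 + R'')}

/-- The hyperboloid `S_{ν,κ,c} = {t > 0, (r+ν)² - (t+κ)² = c}`. -/
def Shyp (ν κ c : ℝ) : Set Spc :=
  {p | 0 < p.1 ∧ (rr p + ν) ^ 2 - (p.1 + κ) ^ 2 = c}

/- The excess of a point over the level `(R₁+ν)² - κ²` of `S_{ν,κ,·}` is its excess in the
inequality defining `𝒟`, corrected by a term that is negative once `κ > R'' + ν` and by a term
of size `O(ν)` whose sign is that of `r - R₁ - t`. Points with `r > R₁ + t` lie in `𝒟` anyway,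
so both inclusions follow, the second one by letting `ν → 0⁺` with `κ = R'' + 2ν`. -/
theorem hyperboloid_excess_eq (t r R₁ R'' ν κ : ℝ) :
    (r + ν) ^ 2 - (t + κ) ^ 2 - ((R₁ + ν) ^ 2 - κ ^ 2) =
      (r - t - R'') * (r + t + R'') - (R₁ ^ 2 - R'' ^ 2) - 2 * t * (κ - R'' - ν)
        + 2 * ν * (r - R₁ - t) := by
  ring

theorem sq_sub_sq_pos_of_lt_of_lt {R₁ R'' ν κ : ℝ} (hR'' : |R''| < R₁) (hν : 0 < ν)
    (hκ : R'' + ν < κ) (hκ' : κ < R₁ + ν) : 0 < (R₁ + ν) ^ 2 - κ ^ 2 :=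
  sub_pos.2 <| sq_lt_sq' (by linarith [neg_abs_le R'']) hκ'

theorem region_ineq_of_add_lt {t r R₁ R'' : ℝ} (ht : 0 < t) (hR'' : |R''| < R₁)
    (hr : R₁ + t < r) : R₁ ^ 2 - R'' ^ 2 < (r - t - R'') * (r + t + R'') := by
  obtain ⟨hR₁, hR₁'⟩ := abs_lt.1 hR''
  calc R₁ ^ 2 - R'' ^ 2 < (R₁ - R'') * (R₁ + 2 * t + R'') := by nlinarith
    _ < (r - t - R'') * (r + t + R'') := by
      apply mul_lt_mul'' <;> linarith

theorem region_ineq_of_hyperboloid_ineq {t r R₁ R'' ν κ : ℝ} (ht : 0 < t) (hR'' : |R''| < R₁)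
    (hν : 0 ≤ ν) (hκ : R'' + ν < κ) (h : (R₁ + ν) ^ 2 - κ ^ 2 < (r + ν) ^ 2 - (t + κ) ^ 2) :
    R₁ ^ 2 - R'' ^ 2 < (r - t - R'') * (r + t + R'') := by
  rcases le_or_gt r (R₁ + t) with hr | hr
  · have hexcess := hyperboloid_excess_eq t r R₁ R'' ν κ
    nlinarith [mul_nonneg hν (sub_nonneg.2 hr)]
  · exact region_ineq_of_add_lt ht hR'' hr

theorem exists_hyperboloid_ineq_of_region_ineq {t r R₁ R'' : ℝ} (hR : R'' < R₁)
    (h : R₁ ^ 2 - R'' ^ 2 < (r - t - R'') * (r + t + R'')) :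
    ∃ ν κ, 0 < ν ∧ R'' + ν < κ ∧ κ < R₁ + ν ∧
      (R₁ + ν) ^ 2 - κ ^ 2 < (r + ν) ^ 2 - (t + κ) ^ 2 := by
  set excess := fun ν : ℝ ↦
    (r + ν) ^ 2 - (t + (R'' + 2 * ν)) ^ 2 - ((R₁ + ν) ^ 2 - (R'' + 2 * ν) ^ 2)
  have hlim : Tendsto excess (𝓝[>] 0)
      (𝓝 ((r - t - R'') * (r + t + R'') - (R₁ ^ 2 - R'' ^ 2))) := by
    have hcont : Continuous excess := by fun_prop
    convert (hcont.tendsto 0).mono_left nhdsWithin_le_nhds using 2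
    simp only [excess]
    ring
  have hpos : ∀ᶠ ν in 𝓝[>] 0, 0 < excess ν := hlim.eventually (lt_mem_nhds (sub_pos.2 h))
  have hsmall : ∀ᶠ ν in 𝓝[>] (0 : ℝ), ν ∈ Ioo 0 (R₁ - R'') := Ioo_mem_nhdsGT (sub_pos.2 hR)
  obtain ⟨ν, hexcess, hsmallν⟩ := (hpos.and hsmall).exists
  exact ⟨ν, R'' + 2 * ν, hsmallν.1, by linarith [hsmallν.1], by linarith [hsmallν.2],
    sub_pos.1 hexcess⟩

theorem stmt16_general (R₁ R'' : ℝ) (hR'' : |R''| < R₁) :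
    (∀ ν κ : ℝ, 0 < ν → R'' + ν < κ → κ < R₁ + ν → 0 < (R₁ + ν) ^ 2 - κ ^ 2) ∧
    DD R₁ R'' = ⋃ (ν : ℝ) (κ : ℝ) (c : ℝ)
      (_ : 0 < ν ∧ R'' + ν < κ ∧ κ < R₁ + ν ∧ (R₁ + ν) ^ 2 - κ ^ 2 < c),
      Shyp ν κ c := by
  refine ⟨fun ν κ hν hκ hκ' ↦ sq_sub_sq_pos_of_lt_of_lt hR'' hν hκ hκ', ?_⟩
  ext p
  simp only [DD, Shyp, mem_iUnion, exists_prop]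
  constructor
  · rintro ⟨ht, hp⟩
    obtain ⟨ν, κ, hν, hκ, hκ', hc⟩ := exists_hyperboloid_ineq_of_region_ineq (abs_lt.1 hR'').2 hp
    exact ⟨ν, κ, _, ⟨hν, hκ, hκ', hc⟩, ht, rfl⟩
  · rintro ⟨ν, κ, c, ⟨hν, hκ, -, hc⟩, ht, rfl⟩
    exact ⟨ht, region_ineq_of_hyperboloid_ineq ht hR'' hν.le hκ hc⟩

/-- Lemma 5.2 of the paper: the foliation of `𝒟_{R₁,R''}` by the
pseudoconvex hyperboloids `S_{ν,κ,c}`. -/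
theorem stmt16 (R₁ R'' : ℝ) (hR₁ : 0 < R₁) (hR'' : |R''| < R₁) :
    (∀ ν κ : ℝ, 0 < ν → R'' + ν < κ → κ < R₁ + ν → 0 < (R₁ + ν) ^ 2 - κ ^ 2) ∧
    DD R₁ R'' = ⋃ (ν : ℝ) (κ : ℝ) (c : ℝ)
      (_ : 0 < ν ∧ R'' + ν < κ ∧ κ < R₁ + ν ∧ (R₁ + ν) ^ 2 - κ ^ 2 < c),
      Shyp ν κ c :=
  stmt16_general R₁ R'' hR''

end UCP
end
end

section
/- Fix R₁ > 0, R'' ∈ ℝ, T₀ > 0, δ ∈ (0,1/2), ν > 0, and κ with R'' + ν < κ < R₁ + ν. Fix c₁, c₂ with (R₁+ν)² − κ² < c₁ ≤ c₂. Then there exist constants 0 < T₁ < T₂ such that ⋃_{c₁ ≤ c ≤ c₂} S_{ν,κ,c} \ K_{δ,T₀,R'',R₁} ⊂ [T₁,T₂] × ℝ³; consequently, the closure of ⋃_{c₁ ≤ c ≤ c₂} S_{ν,κ,c} \ K_{δ,T₀,R'',R₁} is a compact subset of [T₁,T₂] × ℝ³. -/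
noncomputable section
open MeasureTheory Real Set Filter Topology

namespace UCP

/-- The region `Ω_{T₀,R''} = {t ≥ T₀, r - t > R''}`. -/
def Om (T₀ R'' : ℝ) : Set Spc := {p | T₀ ≤ p.1 ∧ R'' < rr p - p.1}

/-- The open region `{t > T₀, r - t > R''}`. -/
def OmO (T₀ R'' : ℝ) : Set Spc := {p | T₀ < p.1 ∧ R'' < rr p - p.1}

/-- The weight `f_δ(t,x) = r - t - δ⁻¹ t^{-δ}`. -/
def fdel (δ : ℝ) (p : Spc) : ℝ := rr p - p.1 - δ⁻¹ * p.1 ^ (-δ)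

/-- `P₁ψ = □ψ + τ² (∂^α f ∂_α f) ψ`. -/
def P1 (τ δ : ℝ) (ψ : Spc → ℝ) (p : Spc) : ℝ :=
  box ψ p + τ ^ 2 * (∑ α : Fin 4, eta α * pd α (fdel δ) p * pd α (fdel δ) p) * ψ p

/-- `P₂ψ = -2τ ∂^α f ∂_α ψ`. -/
def P2 (τ δ : ℝ) (ψ : Spc → ℝ) (p : Spc) : ℝ :=
  -2 * τ * ∑ α : Fin 4, eta α * pd α (fdel δ) p * pd α ψ p

/-- The weighted inner product `⟨F,G⟩ = ∫_{Ω_{T₀,R''}} F G t² dx dt`. -/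
def ip (T₀ R'' : ℝ) (F G : Spc → ℝ) : ℝ := ∫ p in Om T₀ R'', F p * G p * p.1 ^ 2

/-- The weighted norm `‖F‖ = ⟨F,F⟩^{1/2}`. -/
def nrm (T₀ R'' : ℝ) (F : Spc → ℝ) : ℝ := Real.sqrt (ip T₀ R'' F F)

/-- The region `K_{δ,T₀,R'',R₁} = (Ω_{T₀,R''} ∩ {f_δ ≥ R''}) ∪ {t > 0, r - t ≥ R₁}`. -/
def Kset (δ T₀ R'' R₁ : ℝ) : Set Spc :=
  (Om T₀ R'' ∩ {p : Spc | R'' ≤ fdel δ p}) ∪ {p : Spc | 0 < p.1 ∧ R₁ ≤ rr p - p.1}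

/-!
A point of `S_{ν,κ,c}` outside `K` has `r - t < R₁`, and inserting this into
`c₁ ≤ (r+ν)² - (t+κ)²` bounds `t` from below, because `c₁ > (R₁+ν)² - κ²`.
For large `t`, lying outside `K` forces `r - t < R'' + δ⁻¹t^{-δ}` with `δ⁻¹t^{-δ} → 0`,
so `r + ν ≤ t + κ - ε/2` for `ε = κ - R'' - ν > 0`; then `(r+ν)² - (t+κ)² ≤ ε²/4 - ε(t+κ)`,
which eventually drops below `c₁`. Since also `r < t + R₁`, the set is bounded.
-/

lemma mem_iUnion_Shyp_diff_Kset {ν κ c₁ c₂ δ T₀ R'' R₁ : ℝ} {p : Spc}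
    (hp : p ∈ (⋃ c ∈ Icc c₁ c₂, Shyp ν κ c) \ Kset δ T₀ R'' R₁) :
    0 < p.1 ∧ c₁ ≤ (rr p + ν) ^ 2 - (p.1 + κ) ^ 2 ∧ rr p - p.1 < R₁ ∧
      (T₀ ≤ p.1 → rr p - p.1 ≤ R'' ∨ fdel δ p < R'') := by
  obtain ⟨hpS, hpK⟩ := hp
  simp only [mem_iUnion, mem_Icc, Shyp, mem_ofPred_eq, exists_prop] at hpS
  obtain ⟨c, ⟨hc₁, -⟩, ht, rfl⟩ := hpS
  simp only [Kset, Om, mem_union, mem_inter_iff, mem_ofPred_eq, not_or, not_and, not_le] at hpK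
  refine ⟨ht, hc₁, hpK.2 ht, fun hT₀ => ?_⟩
  by_cases h : rr p - p.1 ≤ R''
  · exact Or.inl h
  · exact Or.inr (hpK.1 ⟨hT₀, not_le.1 h⟩)

lemma lt_fst_of_mem_iUnion_Shyp_diff_Kset {ν κ c₁ c₂ δ T₀ R'' R₁ : ℝ} (hν : 0 < ν)
    (hκ : κ < R₁ + ν) {p : Spc}
    (hp : p ∈ (⋃ c ∈ Icc c₁ c₂, Shyp ν κ c) \ Kset δ T₀ R'' R₁) :
    (c₁ - ((R₁ + ν) ^ 2 - κ ^ 2)) / (2 * (R₁ + ν - κ)) < p.1 := by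
  obtain ⟨-, hc₁, hR₁, -⟩ := mem_iUnion_Shyp_diff_Kset hp
  have hr : 0 ≤ rr p + ν := by unfold rr; positivity
  have hsq : (rr p + ν) ^ 2 < (p.1 + R₁ + ν) ^ 2 := pow_lt_pow_left₀ (by linarith) hr two_ne_zero
  rw [div_lt_iff₀ (by linarith)]
  nlinarith

lemma exists_fst_lt_of_mem_iUnion_Shyp_diff_Kset {ν κ c₁ c₂ δ T₀ R'' R₁ : ℝ} (hν : 0 < ν)
    (hδ : 0 < δ) (hκ : R'' + ν < κ) :
    ∃ T, ∀ p ∈ (⋃ c ∈ Icc c₁ c₂, Shyp ν κ c) \ Kset δ T₀ R'' R₁, p.1 < T := by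
  set ε := κ - R'' - ν
  have hε : 0 < ε := by linarith
  have hdecay : Tendsto (fun t : ℝ => δ⁻¹ * t ^ (-δ)) atTop (𝓝 0) := by
    simpa using (tendsto_rpow_neg_atTop hδ).const_mul δ⁻¹
  obtain ⟨N, hN⟩ := eventually_atTop.1 <|
    (eventually_ge_atTop T₀).and <| (hdecay.eventually (gt_mem_nhds (half_pos hε))).and <|
      eventually_gt_atTop ((ε ^ 2 / 4 - c₁) / ε - κ)
  refine ⟨N, fun p hp => lt_of_not_ge fun hpN => ?_⟩
  obtain ⟨hT₀, hsmall, hlarge⟩ := hN p.1 hpN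
  obtain ⟨-, hc₁, -, hout⟩ := mem_iUnion_Shyp_diff_Kset hp
  have hnear : rr p + ν ≤ p.1 + κ - ε / 2 := by
    rcases hout hT₀ with h | h
    · linarith
    · simp only [fdel] at h
      linarith
  have hr : 0 ≤ rr p + ν := by unfold rr; positivity
  have hsq : (rr p + ν) ^ 2 ≤ (p.1 + κ - ε / 2) ^ 2 := pow_le_pow_left₀ hr hnear 2
  have hbelow : ε ^ 2 / 4 - c₁ < (p.1 + κ) * ε :=
    (div_lt_iff₀ hε).1 (by linarith)
  nlinarith

theorem stmt17_general (R₁ R'' T₀ δ ν κ c₁ c₂ : ℝ)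
    (hδ0 : 0 < δ) (hν : 0 < ν)
    (hκ1 : R'' + ν < κ) (hκ2 : κ < R₁ + ν)
    (hc1 : (R₁ + ν) ^ 2 - κ ^ 2 < c₁) :
    ∃ T₁ T₂ : ℝ, 0 < T₁ ∧ T₁ < T₂ ∧
      ((⋃ c ∈ Icc c₁ c₂, Shyp ν κ c) \ Kset δ T₀ R'' R₁
          ⊆ {p : Spc | p.1 ∈ Icc T₁ T₂}) ∧
      closure ((⋃ c ∈ Icc c₁ c₂, Shyp ν κ c) \ Kset δ T₀ R'' R₁)
          ⊆ {p : Spc | p.1 ∈ Icc T₁ T₂} ∧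
      IsCompact (closure ((⋃ c ∈ Icc c₁ c₂, Shyp ν κ c) \ Kset δ T₀ R'' R₁)) := by
  set T₁ := (c₁ - ((R₁ + ν) ^ 2 - κ ^ 2)) / (2 * (R₁ + ν - κ))
  have hT₁ : 0 < T₁ := div_pos (by linarith) (by linarith)
  obtain ⟨T, hT⟩ := exists_fst_lt_of_mem_iUnion_Shyp_diff_Kset (c₁ := c₁) (c₂ := c₂)
    (T₀ := T₀) (R₁ := R₁) hν hδ0 hκ1
  set T₂ := max (T₁ + 1) T
  set B : Set Spc := Icc T₁ T₂ ×ˢ Metric.closedBall 0 (T₂ + R₁)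
  have hsub : (⋃ c ∈ Icc c₁ c₂, Shyp ν κ c) \ Kset δ T₀ R'' R₁ ⊆ B := fun p hp => by
    have hlow := lt_fst_of_mem_iUnion_Shyp_diff_Kset hν hκ2 hp
    have hup : p.1 ≤ T₂ := (hT p hp).le.trans (le_max_right _ _)
    have hr := (mem_iUnion_Shyp_diff_Kset hp).2.2.1
    refine ⟨⟨hlow.le, hup⟩, ?_⟩
    rw [Metric.mem_closedBall, dist_zero_right]
    unfold rr at hr
    linarith
  have hB : IsCompact B := isCompact_Icc.prod (isCompact_closedBall _ _)
  have hcl := closure_minimal hsub hB.isClosed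
  exact ⟨T₁, T₂, hT₁, lt_max_of_lt_left (lt_add_one T₁), fun p hp => (hsub hp).1,
    fun p hp => (hcl hp).1, hB.of_isClosed_subset isClosed_closure hcl⟩

/-- Lemma 5.8 of the paper: the part of the hyperboloids
`S_{ν,κ,c}`, `c₁ ≤ c ≤ c₂`, outside `K_{δ,T₀,R'',R₁}` lies in a time slab
`[T₁,T₂] × ℝ³`, and hence has compact closure. -/
theorem stmt17 (R₁ R'' T₀ δ ν κ c₁ c₂ : ℝ) (hR₁ : 0 < R₁) (hT₀ : 0 < T₀)
    (hδ0 : 0 < δ) (hδ : δ < 1 / 2) (hν : 0 < ν)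
    (hκ1 : R'' + ν < κ) (hκ2 : κ < R₁ + ν)
    (hc1 : (R₁ + ν) ^ 2 - κ ^ 2 < c₁) (hc12 : c₁ ≤ c₂) :
    ∃ T₁ T₂ : ℝ, 0 < T₁ ∧ T₁ < T₂ ∧
      ((⋃ c ∈ Icc c₁ c₂, Shyp ν κ c) \ Kset δ T₀ R'' R₁
          ⊆ {p : Spc | p.1 ∈ Icc T₁ T₂}) ∧
      closure ((⋃ c ∈ Icc c₁ c₂, Shyp ν κ c) \ Kset δ T₀ R'' R₁)
          ⊆ {p : Spc | p.1 ∈ Icc T₁ T₂} ∧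
      IsCompact (closure ((⋃ c ∈ Icc c₁ c₂, Shyp ν κ c) \ Kset δ T₀ R'' R₁)) :=
  stmt17_general R₁ R'' T₀ δ ν κ c₁ c₂ hδ0 hν hκ1 hκ2 hc1

end UCP
end
end

section
/- Fix R₁ > 0, R'' ∈ ℝ, T₀ > 0, δ ∈ (0,1/2), ν > 0, and κ with R'' + ν < κ < R₁ + ν. Then there exists c* > 0 (depending on δ, T₀, R₁, R'', ν, κ) with c* > (R₁+ν)² − κ² such that for every c ≥ c*: S_{ν,κ,c} ⊂ K_{δ,T₀,R'',R₁}. -/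
noncomputable section
open MeasureTheory Real Set Filter Topology

namespace UCP

/-!
Off the region `r - t ≥ R₁`, a point of `S_{ν,κ,c}` satisfies
`c < (t + κ + ε)² - (t + κ)² = 2ε(t + κ) + ε²` with `ε = R₁ + ν - κ`, so large `c` forces large `t`.
Since `c > 0` also gives `r - t > κ - ν = R'' + η` with `η = κ - ν - R''`, the inequality
`f_δ ≥ R''` then follows from `δ⁻¹ t^{-δ} ≤ η`, which holds for all large `t`.
-/

theorem sq_sub_sq_lt_of_lt_add {a b ε : ℝ} (ha : 0 ≤ a) (h : a < b + ε) :
    a ^ 2 - b ^ 2 < 2 * ε * b + ε ^ 2 := by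
  nlinarith [pow_lt_pow_left₀ h ha two_ne_zero]

theorem exists_forall_ge_inv_mul_rpow_neg_lt {δ η : ℝ} (hδ : 0 < δ) (hη : 0 < η) :
    ∃ T, ∀ t ≥ T, δ⁻¹ * t ^ (-δ) < η := by
  have h : Tendsto (fun t : ℝ => δ⁻¹ * t ^ (-δ)) atTop (𝓝 0) := by
    simpa using (tendsto_rpow_neg_atTop hδ).const_mul δ⁻¹
  exact eventually_atTop.1 (h.eventually_lt_const hη)

section Shyp

variable {ν κ c : ℝ} {p : Spc}

theorem sub_lt_rr_sub_of_mem_Shyp (hν : 0 ≤ ν) (hc : 0 < c) (hp : p ∈ Shyp ν κ c) :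
    κ - ν < rr p - p.1 := by
  have hsq : (p.1 + κ) ^ 2 < (rr p + ν) ^ 2 := by linarith [hp.2]
  have := abs_lt_of_sq_lt_sq hsq (add_nonneg (norm_nonneg _) hν)
  linarith [le_abs_self (p.1 + κ)]

theorem lt_of_mem_Shyp_of_rr_sub_lt {R₁ : ℝ} (hν : 0 ≤ ν) (hp : p ∈ Shyp ν κ c)
    (hR : rr p - p.1 < R₁) :
    c < 2 * (R₁ + ν - κ) * (p.1 + κ) + (R₁ + ν - κ) ^ 2 := by
  rw [← hp.2]
  exact sq_sub_sq_lt_of_lt_add (add_nonneg (norm_nonneg _) hν) (by linarith)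

end Shyp

theorem stmt18_general (R₁ R'' T₀ δ ν κ : ℝ)
    (hδ0 : 0 < δ) (hν : 0 < ν)
    (hκ1 : R'' + ν < κ) (hκ2 : κ < R₁ + ν) :
    ∃ cstar : ℝ, 0 < cstar ∧ (R₁ + ν) ^ 2 - κ ^ 2 < cstar ∧
      ∀ c, cstar ≤ c → Shyp ν κ c ⊆ Kset δ T₀ R'' R₁ := by
  set ε := R₁ + ν - κ
  have hε : 0 < ε := by linarith
  obtain ⟨T, hT⟩ := exists_forall_ge_inv_mul_rpow_neg_lt hδ0 (sub_pos.2 (lt_sub_iff_add_lt.2 hκ1))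
  set T' := max T T₀
  set A := (R₁ + ν) ^ 2 - κ ^ 2
  refine ⟨max (2 * ε * (T' + κ) + ε ^ 2) (|A| + 1), by positivity,
    (lt_of_le_of_lt (le_abs_self A) (lt_add_one _)).trans_le (le_max_right _ _),
    fun c hc p hp => ?_⟩
  rcases le_or_gt R₁ (rr p - p.1) with hR | hR
  · exact Or.inr ⟨hp.1, hR⟩
  have hcT : 2 * ε * (T' + κ) + ε ^ 2 ≤ c := (le_max_left _ _).trans hc
  have hc0 : 0 < c := lt_of_lt_of_le (by positivity) ((le_max_right _ _).trans hc)
  have htT : T' < p.1 := by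
    nlinarith [lt_of_mem_Shyp_of_rr_sub_lt (R₁ := R₁) hν.le hp hR]
  have hrt := sub_lt_rr_sub_of_mem_Shyp hν.le hc0 hp
  have hdecay := hT p.1 ((le_max_left T T₀).trans htT.le)
  refine Or.inl ⟨⟨(le_max_right T T₀).trans htT.le, by linarith⟩, ?_⟩
  show R'' ≤ rr p - p.1 - δ⁻¹ * p.1 ^ (-δ)
  linarith

/-- Lemma 5.9 of the paper: for `c` sufficiently large, the
hyperboloid `S_{ν,κ,c}` is contained in `K_{δ,T₀,R'',R₁}`. -/
theorem stmt18 (R₁ R'' T₀ δ ν κ : ℝ) (hR₁ : 0 < R₁) (hT₀ : 0 < T₀)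
    (hδ0 : 0 < δ) (hδ : δ < 1 / 2) (hν : 0 < ν)
    (hκ1 : R'' + ν < κ) (hκ2 : κ < R₁ + ν) :
    ∃ cstar : ℝ, 0 < cstar ∧ (R₁ + ν) ^ 2 - κ ^ 2 < cstar ∧
      ∀ c, cstar ≤ c → Shyp ν κ c ⊆ Kset δ T₀ R'' R₁ :=
  stmt18_general R₁ R'' T₀ δ ν κ hδ0 hν hκ1 hκ2

end UCP
end
end
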